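/- Let V = ℓ²(ℕ;ℂ) ⊗ ℓ²(ℕ;ℂ) be the algebraic tensor product, equipped with a norm ‖·‖_γ satisfying the cross property ‖z₁⊗z₂‖_γ = ‖z₁‖·‖z₂‖ for all z₁,z₂∈ℓ². Assume: (i) for every bounded operator a on ℓ² there is a constant C_a with ‖(a⊗id)(u)‖_γ ≤ C_a·‖u‖_γ for all u∈V; (ii) the normed space (V,‖·‖_γ) satisfies the property (α) inequality for some constant α≥1. Then there exists K≥1 such that for every finitely supported family of scalars (s_{ij}): K^{-1}·(Σ_{i,j}|s_{ij}|²)^{1/2} ≤ ‖Σ_{i,j} s_{ij} e_i⊗e_j‖_γ ≤ K·(Σ_{i,j}|s_{ij}|²)^{1/2}; that is, ‖·‖_γ is equivalent to the Hilbert–Schmidt norm, and the completion of V is isomorphic to the space S² of Hilbert–Schmidt operators on ℓ². -/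

import Mathlib

set_option synthInstance.maxHeartbeats 1000000
set_option maxHeartbeats 1000000

noncomputable section

open scoped TensorProduct

/-- The sign `±1` (as a complex scalar) associated to a boolean. -/
def sgn (b : Bool) : ℂ := if b then 1 else -1

/-- The canonical orthonormal basis of `ℓ²(ℕ;ℂ)`. -/
def e (i : ℕ) : lp (fun _ : ℕ => ℂ) 2 := lp.single 2 i (1 : ℂ)

/-!
By the uniform boundedness principle (the operators on `ℓ²` form a Banach, hence barrelled,
space) one constant `C` works in `Nγ((a ⊗ id) u) ≤ C ‖a‖ Nγ(u)` for all `a`. Write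
`u = ∑_{i<r} e_i ⊗ q_i`. For signs `ε, η` the matrix `D_ε W D_η`, with `W` the normalised
`r × r` Fourier matrix, is unitary; the operator `U` it induces on `span (e_i)_{i<r}` has norm at
most `1` and is inverted there by `U*`, so `Nγ((U ⊗ id) u)` lies within a factor `C` of `Nγ(u)`.
These twisted sums are the Rademacher sums of `y_{li} = e_l ⊗ q_i` with the unimodular
multipliers `ω^{li}` (up to the factor `√r`), whereas by the cross property and the
parallelogram law the untwisted Rademacher average of `y` is exactly `√r (∑ ‖q_i‖²)^{1/2}`.
Property (α), applied once with the multipliers `ω^{li}` and once with `ω^{-li}`, compares the two.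
-/

open scoped ComplexConjugate Matrix InnerProductSpace
open Filter Topology

lemma star_sgn_mul_self (b : Bool) : star (sgn b) * sgn b = 1 := by cases b <;> simp [sgn]

theorem sum_norm_sum_sgn_smul_sq {E : Type*} [NormedAddCommGroup E] [InnerProductSpace ℂ E] :
    ∀ {r : ℕ} (x : Fin r → E),
      ∑ ε : Fin r → Bool, ‖∑ l, sgn (ε l) • x l‖ ^ 2 = 2 ^ r * ∑ l, ‖x l‖ ^ 2
  | 0, x => by simp
  | r + 1, x => by
    have parallelogram (y : E) :
        ∑ b : Bool, ‖sgn b • x 0 + y‖ ^ 2 = 2 * (‖x 0‖ ^ 2 + ‖y‖ ^ 2) := by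
      simp [sgn, ← sub_eq_neg_add, norm_sub_rev y, parallelogram_law_with_norm ℂ]
    rw [← Fintype.sum_equiv (Fin.consEquiv fun _ => Bool) _ _ fun _ => rfl, Fintype.sum_prod_type,
      Finset.sum_comm]
    simp only [Fin.consEquiv_apply, Fin.sum_univ_succ, Fin.cons_zero, Fin.cons_succ, parallelogram,
      ← Finset.mul_sum, Finset.sum_add_distrib, sum_norm_sum_sgn_smul_sq, Finset.sum_const,
      Finset.card_univ, Fintype.card_fun, Fintype.card_bool, Fintype.card_fin, nsmul_eq_mul]
    push_cast
    ring

section PropertyAlpha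

variable {V : Type*} [AddCommGroup V] [Module ℂ V] (N : Seminorm ℂ V) {n m : ℕ}

def rademacherNorm (y : Fin n → Fin m → V) : ℝ :=
  √((∑ ε : Fin n → Bool, ∑ η : Fin m → Bool,
      N (∑ i, ∑ j, (sgn (ε i) * sgn (η j)) • y i j) ^ 2) / 2 ^ (n + m))

def HasPropertyAlpha (α : ℝ) : Prop :=
  ∀ (n m : ℕ) (y : Fin n → Fin m → V) (t : Fin n → Fin m → ℂ), (∀ i j, ‖t i j‖ ≤ 1) →
    rademacherNorm N (fun i j => t i j • y i j) ≤ α * rademacherNorm N y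

variable {N}

lemma sqrt_sum_sum_const_sq_div (b : ℝ) :
    √((∑ _ε : Fin n → Bool, ∑ _η : Fin m → Bool, b ^ 2) / 2 ^ (n + m)) = |b| := by
  rw [← Real.sqrt_sq_eq_abs]
  congr 1
  simp only [Finset.sum_const, Finset.card_univ, Fintype.card_fun, Fintype.card_bool,
    Fintype.card_fin, nsmul_eq_mul]
  push_cast
  field_simp
  ring

lemma rademacherNorm_le {y : Fin n → Fin m → V} {b : ℝ}
    (h : ∀ (ε : Fin n → Bool) (η : Fin m → Bool),
      N (∑ i, ∑ j, (sgn (ε i) * sgn (η j)) • y i j) ≤ b) :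
    rademacherNorm N y ≤ b := by
  have hb : 0 ≤ b := (apply_nonneg N _).trans (h (fun _ => true) fun _ => true)
  rw [← abs_of_nonneg hb, ← sqrt_sum_sum_const_sq_div]
  unfold rademacherNorm
  gcongr with ε _ η
  exact h ε η

lemma le_rademacherNorm {y : Fin n → Fin m → V} {a : ℝ}
    (h : ∀ (ε : Fin n → Bool) (η : Fin m → Bool),
      a ≤ N (∑ i, ∑ j, (sgn (ε i) * sgn (η j)) • y i j)) :
    a ≤ rademacherNorm N y := by
  rcases le_or_gt a 0 with ha | ha
  · exact ha.trans (Real.sqrt_nonneg _)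
  rw [← abs_of_pos ha, ← sqrt_sum_sum_const_sq_div]
  unfold rademacherNorm
  gcongr with ε _ η
  exact h ε η

lemma rademacherNorm_tmul {E F : Type*} [NormedAddCommGroup E] [InnerProductSpace ℂ E]
    [NormedAddCommGroup F] [InnerProductSpace ℂ F] {N : Seminorm ℂ (E ⊗[ℂ] F)}
    (hcross : ∀ x y, N (x ⊗ₜ y) = ‖x‖ * ‖y‖) (x : Fin n → E) (w : Fin m → F) :
    rademacherNorm N (fun i j => x i ⊗ₜ w j) = √(∑ i, ‖x i‖ ^ 2) * √(∑ j, ‖w j‖ ^ 2) := by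
  have hsplit (ε : Fin n → Bool) (η : Fin m → Bool) :
      ∑ i, ∑ j, (sgn (ε i) * sgn (η j)) • (x i ⊗ₜ[ℂ] w j) =
        (∑ i, sgn (ε i) • x i) ⊗ₜ (∑ j, sgn (η j) • w j) := by
    simp only [TensorProduct.sum_tmul, TensorProduct.tmul_sum, TensorProduct.smul_tmul_smul]
    exact Finset.sum_comm
  simp only [rademacherNorm, hsplit, hcross, mul_pow, ← Finset.sum_mul_sum,
    sum_norm_sum_sgn_smul_sq, ← Real.sqrt_mul' _ (Finset.sum_nonneg fun _ _ => sq_nonneg _)]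
  congr 1
  field_simp
  ring

end PropertyAlpha

section UniformBoundedness

variable {𝕜 : Type*} [RCLike 𝕜]

lemma Seminorm.le_mul_of_forall_le_one {V : Type*} [AddCommGroup V] [Module 𝕜 V]
    (N q : Seminorm 𝕜 V) {B : ℝ} (h : ∀ u, N u ≤ 1 → q u ≤ B) (u : V) : q u ≤ B * N u := by
  -- Rescaling `u` to norm exactly `1` fails when `N u = 0`, so let `s ↓ N u` instead.
  have hscale (s : ℝ) (hs : N u < s) : q u ≤ B * s := by
    have hs0 : 0 < s := (apply_nonneg N u).trans_lt hs
    have := h (((s⁻¹ : ℝ) : 𝕜) • u) (by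
      rw [map_smul_eq_mul, RCLike.norm_ofReal, abs_of_pos (inv_pos.2 hs0), inv_mul_le_one₀ hs0]
      exact hs.le)
    rwa [map_smul_eq_mul, RCLike.norm_ofReal, abs_of_pos (inv_pos.2 hs0), inv_mul_le_iff₀ hs0,
      mul_comm] at this
  have hlim : Tendsto (fun s => B * s) (𝓝[>] (N u)) (𝓝 (B * N u)) :=
    ((continuous_const.mul continuous_id).tendsto _).mono_left nhdsWithin_le_nhds
  exact ge_of_tendsto hlim (eventually_nhdsWithin_of_forall hscale)

variable {E F : Type*} [NormedAddCommGroup E] [NormedSpace 𝕜 E] [AddCommGroup F] [Module 𝕜 F]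
  {N : Seminorm 𝕜 (E ⊗[𝕜] F)}

lemma Seminorm.exists_le_mul_norm_rTensor (hcross : ∀ y : F, ∃ c, ∀ x : E, N (x ⊗ₜ y) ≤ ‖x‖ * c)
    (u : E ⊗[𝕜] F) : ∃ M, ∀ a : E →L[𝕜] E, N (a.toLinearMap.rTensor F u) ≤ M * ‖a‖ := by
  induction u using TensorProduct.induction_on with
  | zero => exact ⟨0, fun a => by simp⟩
  | tmul x y =>
    obtain ⟨c, hc⟩ := hcross y
    refine ⟨‖x‖ * |c|, fun a => ?_⟩
    calc N (a.toLinearMap.rTensor F (x ⊗ₜ y)) ≤ ‖a x‖ * c := hc (a x)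
      _ ≤ ‖a x‖ * |c| := by gcongr; exact le_abs_self c
      _ ≤ ‖a‖ * ‖x‖ * |c| := by gcongr; exact a.le_opNorm x
      _ = ‖x‖ * |c| * ‖a‖ := by ring
  | add u v hu hv =>
    obtain ⟨M, hM⟩ := hu
    obtain ⟨M', hM'⟩ := hv
    refine ⟨M + M', fun a => ?_⟩
    rw [map_add]
    linarith [map_add_le_add N (a.toLinearMap.rTensor F u) (a.toLinearMap.rTensor F v), hM a, hM' a]

theorem Seminorm.exists_bound_rTensor [CompleteSpace E]
    (hcross : ∀ y : F, ∃ c, ∀ x : E, N (x ⊗ₜ y) ≤ ‖x‖ * c)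
    (hext : ∀ a : E →L[𝕜] E, ∃ C, ∀ u, N (a.toLinearMap.rTensor F u) ≤ C * N u) :
    ∃ C, 1 ≤ C ∧ ∀ (a : E →L[𝕜] E) u, N (a.toLinearMap.rTensor F u) ≤ C * ‖a‖ * N u := by
  let p (u : E ⊗[𝕜] F) : Seminorm 𝕜 (E →L[𝕜] E) :=
    N.comp (LinearMap.applyₗ u ∘ₗ LinearMap.rTensorHom F ∘ₗ ContinuousLinearMap.coeLM 𝕜)
  have hp_cont (u : E ⊗[𝕜] F) : Continuous (p u) := by
    obtain ⟨M, hM⟩ := Seminorm.exists_le_mul_norm_rTensor hcross u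
    refine Seminorm.continuous_of_le (q := M.toNNReal • normSeminorm 𝕜 _) ?_ fun a => ?_
    · simpa using continuous_norm.const_smul M.toNNReal
    · simp only [smul_apply, coe_normSeminorm, NNReal.smul_def, smul_eq_mul]
      exact (hM a).trans (by gcongr; exact M.le_coe_toNNReal)
  have hbdd : BddAbove (Set.range fun u : {u // N u ≤ 1} => p u) := by
    refine Seminorm.bddAbove_range_iff.2 fun a => ?_
    obtain ⟨C, hC⟩ := hext a
    refine ⟨|C|, Set.forall_mem_range.2 fun u => ?_⟩
    calc p u a ≤ C * N u := hC u
      _ ≤ |C| * 1 := by gcongr; exacts [le_abs_self C, u.2]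
      _ = |C| := mul_one _
  -- Banach–Steinhaus: `E →L[𝕜] E` is complete, hence barrelled.
  obtain ⟨C, -, hbound⟩ := (⨆ u : {u // N u ≤ 1}, p u).bound_of_continuous_normedSpace
    (Seminorm.coe_iSup_eq hbdd ▸ Seminorm.continuous_iSup _ (fun u => hp_cont u) hbdd)
  refine ⟨max C 1, le_max_right _ _, fun a u => ?_⟩
  calc N (a.toLinearMap.rTensor F u) ≤ C * ‖a‖ * N u := by
        refine N.le_mul_of_forall_le_one (N.comp (a.toLinearMap.rTensor F)) (fun u hu => ?_) u
        calc p u a ≤ (⨆ u : {u // N u ≤ 1}, p u) a := by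
              rw [Seminorm.iSup_apply hbdd]
              exact le_ciSup (f := fun u : {u // N u ≤ 1} => p u a)
                (Seminorm.bddAbove_range_iff.1 hbdd a) ⟨u, hu⟩
          _ ≤ C * ‖a‖ := hbound a
    _ ≤ max C 1 * ‖a‖ * N u := by gcongr; exact le_max_left _ _

end UniformBoundedness

section MatrixOp

variable {𝕜 E ι : Type*} [RCLike 𝕜] [NormedAddCommGroup E] [InnerProductSpace 𝕜 E] [Fintype ι]
  {v : ι → E}

def matrixOp (v : ι → E) (c : Matrix ι ι 𝕜) : E →L[𝕜] E :=
  ∑ l, ∑ i, c l i • (innerSL 𝕜 (v i)).smulRight (v l)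

lemma matrixOp_apply (c : Matrix ι ι 𝕜) (x : E) :
    matrixOp v c x = ∑ l, (c *ᵥ fun i => ⟪v i, x⟫_𝕜) l • v l := by
  simp [matrixOp, Matrix.mulVec, dotProduct, Finset.sum_smul, smul_smul]

lemma Orthonormal.matrixOp_apply_sum_smul (hv : Orthonormal 𝕜 v) (c : Matrix ι ι 𝕜)
    (w : ι → 𝕜) : matrixOp v c (∑ i, w i • v i) = ∑ l, (c *ᵥ w) l • v l := by
  simp only [matrixOp_apply, hv.inner_right_fintype]

lemma Orthonormal.matrixOp_apply_self [DecidableEq ι] (hv : Orthonormal 𝕜 v) (c : Matrix ι ι 𝕜)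
    (j : ι) : matrixOp v c (v j) = ∑ l, c l j • v l := by
  simpa [Pi.single_apply] using hv.matrixOp_apply_sum_smul c (Pi.single j 1)

lemma Orthonormal.matrixOp_matrixOp (hv : Orthonormal 𝕜 v) (c d : Matrix ι ι 𝕜) (x : E) :
    matrixOp v c (matrixOp v d x) = matrixOp v (c * d) x := by
  rw [matrixOp_apply d, hv.matrixOp_apply_sum_smul, Matrix.mulVec_mulVec, matrixOp_apply]

lemma Orthonormal.matrixOp_star_matrixOp_apply_self [DecidableEq ι] (hv : Orthonormal 𝕜 v)
    {c : Matrix ι ι 𝕜} (hc : c ∈ Matrix.unitaryGroup ι 𝕜) (j : ι) :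
    matrixOp v (star c) (matrixOp v c (v j)) = v j := by
  rw [hv.matrixOp_matrixOp, Matrix.mem_unitaryGroup_iff'.mp hc, hv.matrixOp_apply_self]
  simp [Matrix.one_apply]

lemma Orthonormal.norm_sum_smul_sq (hv : Orthonormal 𝕜 v) (w : ι → 𝕜) :
    ‖∑ i, w i • v i‖ ^ 2 = ∑ i, ‖w i‖ ^ 2 :=
  hv.orthogonalFamily.norm_sum w Finset.univ

lemma Matrix.sum_norm_mulVec_sq [DecidableEq ι] {c : Matrix ι ι 𝕜}
    (hc : c ∈ Matrix.unitaryGroup ι 𝕜) (w : ι → 𝕜) :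
    ∑ l, ‖(c *ᵥ w) l‖ ^ 2 = ∑ i, ‖w i‖ ^ 2 := by
  have key : star (c *ᵥ w) ⬝ᵥ (c *ᵥ w) = star w ⬝ᵥ w := by
    rw [Matrix.star_mulVec, Matrix.dotProduct_mulVec, Matrix.vecMul_vecMul,
      ← Matrix.star_eq_conjTranspose, Matrix.mem_unitaryGroup_iff'.mp hc, Matrix.vecMul_one]
  simp only [dotProduct, Pi.star_apply, RCLike.star_def, RCLike.conj_mul] at key
  exact_mod_cast key

lemma Orthonormal.norm_matrixOp_le_one [DecidableEq ι] (hv : Orthonormal 𝕜 v)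
    {c : Matrix ι ι 𝕜} (hc : c ∈ Matrix.unitaryGroup ι 𝕜) : ‖matrixOp v c‖ ≤ 1 := by
  refine ContinuousLinearMap.opNorm_le_bound _ zero_le_one fun x => ?_
  rw [one_mul, ← sq_le_sq₀ (norm_nonneg _) (norm_nonneg _), matrixOp_apply, hv.norm_sum_smul_sq,
    Matrix.sum_norm_mulVec_sq hc]
  exact hv.sum_inner_products_le x

end MatrixOp

section Fourier

def fourierMatrix (r : ℕ) : Matrix (Fin r) (Fin r) ℂ :=
  Matrix.of fun l i => Complex.exp (2 * Real.pi * Complex.I / r) ^ ((l : ℕ) * i)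

lemma norm_fourierMatrix_apply (r : ℕ) (l i : Fin r) : ‖fourierMatrix r l i‖ = 1 := by
  rw [fourierMatrix, Matrix.of_apply, norm_pow, Complex.norm_exp]
  simp

lemma IsPrimitiveRoot.sum_conj_pow_mul_pow {ζ : ℂ} {r : ℕ} (hζ : IsPrimitiveRoot ζ r) {i j : ℕ}
    (hi : i < r) (hj : j < r) :
    ∑ l ∈ Finset.range r, conj (ζ ^ (l * i)) * ζ ^ (l * j) = if i = j then (r : ℂ) else 0 := by
  have hζ0 : ζ ≠ 0 := hζ.ne_zero (by omega)
  have hterm (l : ℕ) : conj (ζ ^ (l * i)) * ζ ^ (l * j) = (ζ ^ j / ζ ^ i) ^ l := by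
    rw [← Complex.inv_eq_conj (by rw [norm_pow, hζ.norm'_eq_one (by omega), one_pow])]
    ring
  simp only [hterm]
  split_ifs with hij
  · simp [hij, hζ0]
  have hμ : ζ ^ j / ζ ^ i ≠ 1 := fun h =>
    hij (hζ.pow_inj hi hj ((div_eq_one_iff_eq (pow_ne_zero _ hζ0)).mp h).symm)
  rw [geom_sum_eq hμ, div_pow, ← pow_mul, ← pow_mul, mul_comm j, mul_comm i, pow_mul, pow_mul,
    hζ.pow_eq_one]
  simp

lemma fourierMatrix_conjTranspose_mul_self (r : ℕ) :
    (fourierMatrix r)ᴴ * fourierMatrix r = (r : ℂ) • 1 := by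
  ext i j
  rcases Nat.eq_zero_or_pos r with rfl | hr
  · exact i.elim0
  have := (Complex.isPrimitiveRoot_exp r hr.ne').sum_conj_pow_mul_pow i.isLt j.isLt
  rw [← Fin.sum_univ_eq_sum_range (fun l => conj (Complex.exp (2 * Real.pi * Complex.I / r) ^
    (l * i)) * Complex.exp (2 * Real.pi * Complex.I / r) ^ (l * j))] at this
  simpa [Matrix.mul_apply, fourierMatrix, Matrix.one_apply, Fin.val_inj] using this

lemma smul_fourierMatrix_mem_unitaryGroup (r : ℕ) :
    (√r : ℂ)⁻¹ • fourierMatrix r ∈ Matrix.unitaryGroup (Fin r) ℂ := by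
  rw [Matrix.mem_unitaryGroup_iff', Matrix.star_eq_conjTranspose, Matrix.conjTranspose_smul,
    Matrix.smul_mul, Matrix.mul_smul, fourierMatrix_conjTranspose_mul_self, smul_smul, smul_smul]
  rcases Nat.eq_zero_or_pos r with rfl | hr
  · exact Subsingleton.elim _ _
  rw [star_inv₀, Complex.star_def, Complex.conj_ofReal, ← mul_inv, ← Complex.ofReal_mul,
    Real.mul_self_sqrt (Nat.cast_nonneg r)]
  simp [hr.ne']

lemma diagonal_sgn_mem_unitaryGroup {r : ℕ} (ε : Fin r → Bool) :
    Matrix.diagonal (fun l => sgn (ε l)) ∈ Matrix.unitaryGroup (Fin r) ℂ := by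
  rw [Matrix.mem_unitaryGroup_iff', Matrix.star_eq_conjTranspose, Matrix.diagonal_conjTranspose,
    Matrix.diagonal_mul_diagonal, ← Matrix.diagonal_one]
  exact congrArg Matrix.diagonal (funext fun l => star_sgn_mul_self (ε l))

def signedFourierMatrix {r : ℕ} (ε η : Fin r → Bool) : Matrix (Fin r) (Fin r) ℂ :=
  Matrix.diagonal (fun l => sgn (ε l)) * ((√r : ℂ)⁻¹ • fourierMatrix r) *
    Matrix.diagonal (fun i => sgn (η i))

lemma signedFourierMatrix_mem_unitaryGroup {r : ℕ} (ε η : Fin r → Bool) :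
    signedFourierMatrix ε η ∈ Matrix.unitaryGroup (Fin r) ℂ :=
  mul_mem (mul_mem (diagonal_sgn_mem_unitaryGroup ε) (smul_fourierMatrix_mem_unitaryGroup r))
    (diagonal_sgn_mem_unitaryGroup η)

lemma signedFourierMatrix_apply {r : ℕ} (ε η : Fin r → Bool) (l i : Fin r) :
    (√r : ℂ) * signedFourierMatrix ε η l i = (sgn (ε l) * sgn (η i)) * fourierMatrix r l i := by
  have : (√r : ℂ) ≠ 0 := by
    exact_mod_cast (Real.sqrt_pos.2 (Nat.cast_pos.2 (Fin.pos l))).ne'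
  simp only [signedFourierMatrix, Matrix.diagonal_mul, Matrix.mul_diagonal, Matrix.smul_apply,
    smul_eq_mul]
  field_simp

end Fourier

section HilbertSchmidt

variable {E F : Type*} [NormedAddCommGroup E] [InnerProductSpace ℂ E]
  [NormedAddCommGroup F] [InnerProductSpace ℂ F] {N : Seminorm ℂ (E ⊗[ℂ] F)} {C : ℝ}
  {ι : Type*} [Fintype ι] [DecidableEq ι] {v : ι → E}

lemma rTensor_matrixOp_le (hC : ∀ (a : E →L[ℂ] E) u, N (a.toLinearMap.rTensor F u) ≤ C * ‖a‖ * N u)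
    (hC0 : 0 ≤ C) (hv : Orthonormal ℂ v) {c : Matrix ι ι ℂ} (hc : c ∈ Matrix.unitaryGroup ι ℂ)
    (u : E ⊗[ℂ] F) : N ((matrixOp v c).toLinearMap.rTensor F u) ≤ C * N u :=
  (hC _ u).trans (mul_le_mul_of_nonneg_right
    (mul_le_of_le_one_right hC0 (hv.norm_matrixOp_le_one hc)) (apply_nonneg N u))

lemma le_rTensor_matrixOp_sum_tmul
    (hC : ∀ (a : E →L[ℂ] E) u, N (a.toLinearMap.rTensor F u) ≤ C * ‖a‖ * N u)
    (hC0 : 0 ≤ C) (hv : Orthonormal ℂ v) {c : Matrix ι ι ℂ} (hc : c ∈ Matrix.unitaryGroup ι ℂ)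
    (q : ι → F) :
    N (∑ i, v i ⊗ₜ q i) ≤ C * N ((matrixOp v c).toLinearMap.rTensor F (∑ i, v i ⊗ₜ q i)) := by
  have hinv : (matrixOp v (star c)).toLinearMap.rTensor F
      ((matrixOp v c).toLinearMap.rTensor F (∑ i, v i ⊗ₜ q i)) = ∑ i, v i ⊗ₜ q i := by
    simp only [map_sum, LinearMap.rTensor_tmul, ContinuousLinearMap.coe_coe,
      hv.matrixOp_star_matrixOp_apply_self hc]
  calc N (∑ i, v i ⊗ₜ q i) = N ((matrixOp v (star c)).toLinearMap.rTensor F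
      ((matrixOp v c).toLinearMap.rTensor F (∑ i, v i ⊗ₜ q i))) := by rw [hinv]
    _ ≤ _ := rTensor_matrixOp_le hC hC0 hv (Unitary.star_mem hc) _

lemma seminorm_sum_sgn_smul_fourierMatrix_tmul {r : ℕ} {v : Fin r → E} (hv : Orthonormal ℂ v)
    (q : Fin r → F) (ε η : Fin r → Bool) :
    N (∑ l, ∑ i, (sgn (ε l) * sgn (η i)) • (fourierMatrix r l i • v l ⊗ₜ[ℂ] q i)) =
      √r * N ((matrixOp v (signedFourierMatrix ε η)).toLinearMap.rTensor F (∑ i, v i ⊗ₜ q i)) := by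
  have : ∑ l, ∑ i, (sgn (ε l) * sgn (η i)) • (fourierMatrix r l i • v l ⊗ₜ[ℂ] q i) =
      (√r : ℂ) • (matrixOp v (signedFourierMatrix ε η)).toLinearMap.rTensor F
        (∑ i, v i ⊗ₜ q i) := by
    simp only [map_sum, LinearMap.rTensor_tmul, ContinuousLinearMap.coe_coe,
      hv.matrixOp_apply_self, TensorProduct.sum_tmul, Finset.smul_sum,
      ← TensorProduct.smul_tmul', smul_smul, signedFourierMatrix_apply]
    exact Finset.sum_comm
  rw [this, map_smul_eq_mul, Complex.norm_real, Real.norm_of_nonneg (Real.sqrt_nonneg _)]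

lemma rademacherNorm_fourierMatrix_tmul_bounds
    (hC : ∀ (a : E →L[ℂ] E) u, N (a.toLinearMap.rTensor F u) ≤ C * ‖a‖ * N u) (hC0 : 0 < C)
    {r : ℕ} {v : Fin r → E} (hv : Orthonormal ℂ v) (q : Fin r → F) :
    √r * (N (∑ i, v i ⊗ₜ q i) / C) ≤
        rademacherNorm N (fun l i => fourierMatrix r l i • v l ⊗ₜ[ℂ] q i) ∧
      rademacherNorm N (fun l i => fourierMatrix r l i • v l ⊗ₜ[ℂ] q i) ≤
        √r * (C * N (∑ i, v i ⊗ₜ q i)) := by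
  constructor
  · refine le_rademacherNorm fun ε η => ?_
    rw [seminorm_sum_sgn_smul_fourierMatrix_tmul hv]
    gcongr
    exact (div_le_iff₀' hC0).2
      (le_rTensor_matrixOp_sum_tmul hC hC0.le hv (signedFourierMatrix_mem_unitaryGroup ε η) q)
  · refine rademacherNorm_le fun ε η => ?_
    rw [seminorm_sum_sgn_smul_fourierMatrix_tmul hv]
    gcongr
    exact rTensor_matrixOp_le hC hC0.le hv (signedFourierMatrix_mem_unitaryGroup ε η) _

theorem HasPropertyAlpha.sum_tmul_bounds {α : ℝ} (hα : HasPropertyAlpha N α) (hα0 : 0 ≤ α)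
    (hcross : ∀ x y, N (x ⊗ₜ y) = ‖x‖ * ‖y‖) (hC0 : 0 < C)
    (hC : ∀ (a : E →L[ℂ] E) u, N (a.toLinearMap.rTensor F u) ≤ C * ‖a‖ * N u)
    {r : ℕ} (hr : 0 < r) {v : Fin r → E} (hv : Orthonormal ℂ v) (q : Fin r → F) :
    √(∑ i, ‖q i‖ ^ 2) ≤ α * C * N (∑ i, v i ⊗ₜ q i) ∧
      N (∑ i, v i ⊗ₜ q i) ≤ α * C * √(∑ i, ‖q i‖ ^ 2) := by
  set u := ∑ i, v i ⊗ₜ[ℂ] q i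
  set Q := √(∑ i, ‖q i‖ ^ 2)
  let y (l i : Fin r) : E ⊗[ℂ] F := v l ⊗ₜ q i
  let t : Fin r → Fin r → ℂ := fourierMatrix r
  have hsr : 0 < √(r : ℝ) := Real.sqrt_pos.2 (Nat.cast_pos.2 hr)
  have hy : rademacherNorm N y = √r * Q := by
    simp [y, rademacherNorm_tmul hcross, hv.norm_eq_one, Q]
  obtain ⟨hz_ge, hz_le⟩ := rademacherNorm_fourierMatrix_tmul_bounds hC hC0 hv q
  have hzy : rademacherNorm N (fun l i => t l i • y l i) ≤ α * rademacherNorm N y :=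
    hα r r y t fun l i => (norm_fourierMatrix_apply r l i).le
  have hyz : rademacherNorm N y ≤ α * rademacherNorm N (fun l i => t l i • y l i) := by
    have hconj : (fun l i => conj (t l i) • t l i • y l i) = y := by
      ext l i : 2
      simp [t, smul_smul, RCLike.conj_mul, norm_fourierMatrix_apply]
    simpa only [hconj] using hα r r (fun l i => t l i • y l i) (fun l i => conj (t l i))
      fun l i => (RCLike.norm_conj _).trans_le (norm_fourierMatrix_apply r l i).le
  constructor
  · refine le_of_mul_le_mul_left ?_ hsr
    calc √r * Q = rademacherNorm N y := hy.symm
      _ ≤ α * (√r * (C * N u)) := hyz.trans (by gcongr)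
      _ = √r * (α * C * N u) := by ring
  · have : N u / C ≤ α * Q := le_of_mul_le_mul_left (calc
        √r * (N u / C) ≤ α * (√r * Q) := hy ▸ hz_ge.trans hzy
        _ = √r * (α * Q) := by ring) hsr
    rw [div_le_iff₀' hC0] at this
    linarith

end HilbertSchmidt

lemma Finset.sum_eq_sum_fin_fin_of_subset {M : Type*} [AddCommMonoid M] {S : Finset (ℕ × ℕ)}
    {r : ℕ} (hS : S ⊆ Finset.range r ×ˢ Finset.range r) (φ : ℕ × ℕ → M)
    (hφ : ∀ p ∉ S, φ p = 0) : ∑ p ∈ S, φ p = ∑ i : Fin r, ∑ j : Fin r, φ (i, j) := by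
  rw [Finset.sum_subset hS fun p _ hp => hφ p hp, Finset.sum_product,
    ← Fin.sum_univ_eq_sum_range (fun i => ∑ j ∈ Finset.range r, φ (i, j))]
  exact Finset.sum_congr rfl fun i _ => (Fin.sum_univ_eq_sum_range (fun j => φ (i, j)) _).symm

lemma Orthonormal.exists_sum_tmul_eq {E F : Type*} [AddCommGroup E] [Module ℂ E]
    [NormedAddCommGroup F] [InnerProductSpace ℂ F] (g : ℕ → E) {f : ℕ → F}
    (hf : Orthonormal ℂ f) (S : Finset (ℕ × ℕ)) (s : ℕ × ℕ → ℂ) :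
    ∃ r, 0 < r ∧ ∃ q : Fin r → F, ∑ p ∈ S, s p • (g p.1 ⊗ₜ[ℂ] f p.2) = ∑ i : Fin r, g i ⊗ₜ q i ∧
      ∑ p ∈ S, ‖s p‖ ^ 2 = ∑ i, ‖q i‖ ^ 2 := by
  classical
  obtain ⟨r, hr⟩ := (S.image fun p => max p.1 p.2).exists_nat_subset_range
  have hS : S ⊆ Finset.range (r + 1) ×ˢ Finset.range (r + 1) := fun p hp => by
    have := hr (Finset.mem_image_of_mem _ hp)
    simp only [Finset.mem_range, Finset.mem_product] at this ⊢
    omega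
  let s' (p : ℕ × ℕ) : ℂ := if p ∈ S then s p else 0
  have hs' (p : ℕ × ℕ) (hp : p ∈ S) : s p = s' p := (if_pos hp).symm
  have hs'0 (p : ℕ × ℕ) (hp : p ∉ S) : s' p = 0 := if_neg hp
  refine ⟨r + 1, r.succ_pos, fun i => ∑ j : Fin (r + 1), s' (i, j) • f j, ?_, ?_⟩
  · rw [Finset.sum_congr rfl fun p hp => by rw [hs' p hp],
      Finset.sum_eq_sum_fin_fin_of_subset hS (fun p => s' p • (g p.1 ⊗ₜ[ℂ] f p.2))
        fun p hp => by rw [hs'0 p hp, zero_smul]]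
    simp only [TensorProduct.tmul_sum, TensorProduct.tmul_smul]
  · rw [Finset.sum_congr rfl fun p hp => by rw [hs' p hp],
      Finset.sum_eq_sum_fin_fin_of_subset hS (fun p => ‖s' p‖ ^ 2)
        fun p hp => by rw [hs'0 p hp, norm_zero, zero_pow two_ne_zero]]
    exact Finset.sum_congr rfl fun i _ =>
      ((hf.comp _ Fin.val_injective).norm_sum_smul_sq fun j => s' (i, j)).symm

lemma orthonormal_e : Orthonormal ℂ e := by
  rw [orthonormal_iff_ite]
  intro i j
  simp [e, lp.inner_single_left, lp.single_apply, Pi.single_apply]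

theorem crossnorm_propAlpha_eq_hilbertSchmidt_general
    (Nγ : TensorProduct ℂ (lp (fun _ : ℕ => ℂ) 2) (lp (fun _ : ℕ => ℂ) 2) → ℝ)
    (htriangle : ∀ u v, Nγ (u + v) ≤ Nγ u + Nγ v)
    (hhomog : ∀ (c : ℂ) u, Nγ (c • u) = ‖c‖ * Nγ u)
    (hcross : ∀ z₁ z₂ : lp (fun _ : ℕ => ℂ) 2, Nγ (z₁ ⊗ₜ[ℂ] z₂) = ‖z₁‖ * ‖z₂‖)
    (hext : ∀ a : lp (fun _ : ℕ => ℂ) 2 →L[ℂ] lp (fun _ : ℕ => ℂ) 2,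
      ∃ C : ℝ, ∀ u, Nγ (TensorProduct.map a.toLinearMap LinearMap.id u) ≤ C * Nγ u)
    (α : ℝ) (hα1 : 1 ≤ α)
    (hα : ∀ (n m : ℕ)
      (y : Fin n → Fin m → TensorProduct ℂ (lp (fun _ : ℕ => ℂ) 2) (lp (fun _ : ℕ => ℂ) 2))
      (t : Fin n → Fin m → ℂ), (∀ i j, ‖t i j‖ ≤ 1) →
      Real.sqrt ((∑ ε : Fin n → Bool, ∑ η : Fin m → Bool,
          (Nγ (∑ i, ∑ j, ((sgn (ε i) * sgn (η j)) * t i j) • y i j)) ^ 2) / 2 ^ (n + m))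
        ≤ α * Real.sqrt ((∑ ε : Fin n → Bool, ∑ η : Fin m → Bool,
          (Nγ (∑ i, ∑ j, (sgn (ε i) * sgn (η j)) • y i j)) ^ 2) / 2 ^ (n + m))) :
    ∃ K : ℝ, 1 ≤ K ∧ ∀ (F : Finset (ℕ × ℕ)) (s : ℕ × ℕ → ℂ),
      K⁻¹ * Real.sqrt (∑ p ∈ F, ‖s p‖ ^ 2) ≤
          Nγ (∑ p ∈ F, s p • (e p.1 ⊗ₜ[ℂ] e p.2)) ∧
        Nγ (∑ p ∈ F, s p • (e p.1 ⊗ₜ[ℂ] e p.2)) ≤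
          K * Real.sqrt (∑ p ∈ F, ‖s p‖ ^ 2) := by
  let N : Seminorm ℂ _ := Seminorm.of Nγ htriangle hhomog
  obtain ⟨C, hC1, hC⟩ :=
    Seminorm.exists_bound_rTensor (N := N) (fun y => ⟨‖y‖, fun x => (hcross x y).le⟩) hext
  have hN : HasPropertyAlpha N α := fun n m y t ht => by
    have hNγ : ⇑N = Nγ := rfl
    simpa only [rademacherNorm, hNγ, mul_smul] using hα n m y t ht
  have hK : 0 < α * C := by positivity
  refine ⟨α * C, one_le_mul_of_one_le_of_one_le hα1 hC1, fun F s => ?_⟩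
  obtain ⟨r, hr, q, hsum, hnorm⟩ := orthonormal_e.exists_sum_tmul_eq e F s
  rw [hsum, hnorm, inv_mul_le_iff₀ hK]
  exact hN.sum_tmul_bounds (by linarith) hcross (by linarith) hC hr
    (orthonormal_e.comp _ Fin.val_injective) q

/-- A cross norm on the algebraic tensor product `ℓ² ⊗ ℓ²` such that every
bounded operator `a` on `ℓ²` has a bounded extension `a ⊗ id`, and satisfying
the property (α) inequality, must be equivalent to the Hilbert–Schmidt norm;
hence the completion is isomorphic to `S²`. -/
theorem crossnorm_propAlpha_eq_hilbertSchmidt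
    (Nγ : TensorProduct ℂ (lp (fun _ : ℕ => ℂ) 2) (lp (fun _ : ℕ => ℂ) 2) → ℝ)
    (hnonneg : ∀ u, 0 ≤ Nγ u)
    (htriangle : ∀ u v, Nγ (u + v) ≤ Nγ u + Nγ v)
    (hhomog : ∀ (c : ℂ) u, Nγ (c • u) = ‖c‖ * Nγ u)
    (hdef : ∀ u, Nγ u = 0 → u = 0)
    (hcross : ∀ z₁ z₂ : lp (fun _ : ℕ => ℂ) 2, Nγ (z₁ ⊗ₜ[ℂ] z₂) = ‖z₁‖ * ‖z₂‖)
    (hext : ∀ a : lp (fun _ : ℕ => ℂ) 2 →L[ℂ] lp (fun _ : ℕ => ℂ) 2,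
      ∃ C : ℝ, ∀ u, Nγ (TensorProduct.map a.toLinearMap LinearMap.id u) ≤ C * Nγ u)
    (α : ℝ) (hα1 : 1 ≤ α)
    (hα : ∀ (n m : ℕ)
      (y : Fin n → Fin m → TensorProduct ℂ (lp (fun _ : ℕ => ℂ) 2) (lp (fun _ : ℕ => ℂ) 2))
      (t : Fin n → Fin m → ℂ), (∀ i j, ‖t i j‖ ≤ 1) →
      Real.sqrt ((∑ ε : Fin n → Bool, ∑ η : Fin m → Bool,
          (Nγ (∑ i, ∑ j, ((sgn (ε i) * sgn (η j)) * t i j) • y i j)) ^ 2) / 2 ^ (n + m))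
        ≤ α * Real.sqrt ((∑ ε : Fin n → Bool, ∑ η : Fin m → Bool,
          (Nγ (∑ i, ∑ j, (sgn (ε i) * sgn (η j)) • y i j)) ^ 2) / 2 ^ (n + m))) :
    ∃ K : ℝ, 1 ≤ K ∧ ∀ (F : Finset (ℕ × ℕ)) (s : ℕ × ℕ → ℂ),
      K⁻¹ * Real.sqrt (∑ p ∈ F, ‖s p‖ ^ 2) ≤
          Nγ (∑ p ∈ F, s p • (e p.1 ⊗ₜ[ℂ] e p.2)) ∧
        Nγ (∑ p ∈ F, s p • (e p.1 ⊗ₜ[ℂ] e p.2)) ≤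
          K * Real.sqrt (∑ p ∈ F, ‖s p‖ ^ 2) :=
  crossnorm_propAlpha_eq_hilbertSchmidt_general Nγ htriangle hhomog hcross hext α hα1 hα

end
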